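/- Generic recurrence relation for the C-orbit functions of C_2: For positive integers k, l and y = (y₁,y₂) ∈ ℝ², set C_{(k,l)}(y) = 4[cos(2π(k+l)y₁)cos(2πl y₂) + cos(2πl y₁)cos(2π(k+l)y₂)]. Then for all integers k, l ≥ 2: 2(cos 2πy₁ + cos 2πy₂) · C_{(k,l)}(y) = C_{(k+1,l)}(y) + C_{(k−1,l)}(y) + C_{(k+1,l−1)}(y) + C_{(k−1,l+1)}(y). -/
import Mathlib


open Real

/-- The `C`-orbit function `C_{(k,l)}` of `C₂` in orthonormal coordinates. -/
noncomputable def CC2 (k l : ℕ) (y₁ y₂ : ℝ) : ℝ :=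
  4 * (cos (2 * π * ((k : ℝ) + l) * y₁) * cos (2 * π * (l : ℝ) * y₂)
    + cos (2 * π * (l : ℝ) * y₁) * cos (2 * π * ((k : ℝ) + l) * y₂))

lemma CC2_key (K L y₁ y₂ : ℝ) :
    2 * (cos (2 * π * y₁) + cos (2 * π * y₂)) *
      (4 * (cos (2 * π * K * y₁) * cos (2 * π * L * y₂)
        + cos (2 * π * L * y₁) * cos (2 * π * K * y₂))) =
    4 * (cos (2 * π * (K + 1) * y₁) * cos (2 * π * L * y₂)
        + cos (2 * π * L * y₁) * cos (2 * π * (K + 1) * y₂))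
    + 4 * (cos (2 * π * (K - 1) * y₁) * cos (2 * π * L * y₂)
        + cos (2 * π * L * y₁) * cos (2 * π * (K - 1) * y₂))
    + 4 * (cos (2 * π * K * y₁) * cos (2 * π * (L - 1) * y₂)
        + cos (2 * π * (L - 1) * y₁) * cos (2 * π * K * y₂))
    + 4 * (cos (2 * π * K * y₁) * cos (2 * π * (L + 1) * y₂)
        + cos (2 * π * (L + 1) * y₁) * cos (2 * π * K * y₂)) := by
  have h1 : ∀ c y : ℝ, 2 * π * (c + 1) * y = 2 * π * c * y + 2 * π * y := by
    intros; ring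
  have h2 : ∀ c y : ℝ, 2 * π * (c - 1) * y = 2 * π * c * y - 2 * π * y := by
    intros; ring
  simp only [h1, h2, cos_add, cos_sub]
  ring

/-- Generic recurrence relation for the `C`-orbit functions of `C₂`:
`u₁·C_{(k,l)} = C_{(k+1,l)} + C_{(k−1,l)} + C_{(k+1,l−1)} + C_{(k−1,l+1)}` for `k, l ≥ 2`. -/
theorem CC2_recurrence (k l : ℕ) (hk : 2 ≤ k) (hl : 2 ≤ l) (y₁ y₂ : ℝ) :
    2 * (cos (2 * π * y₁) + cos (2 * π * y₂)) * CC2 k l y₁ y₂ =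
      CC2 (k + 1) l y₁ y₂ + CC2 (k - 1) l y₁ y₂ + CC2 (k + 1) (l - 1) y₁ y₂
        + CC2 (k - 1) (l + 1) y₁ y₂ := by
  obtain ⟨a, rfl⟩ : ∃ a, k = a + 2 := ⟨k - 2, by omega⟩
  obtain ⟨b, rfl⟩ : ∃ b, l = b + 2 := ⟨l - 2, by omega⟩
  simp only [CC2, Nat.add_sub_cancel]
  push_cast
  have h := CC2_key ((a : ℝ) + b + 4) ((b : ℝ) + 2) y₁ y₂
  ring_nf at h ⊢
  linarith [h]
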